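/- arXiv:1210.1239 — 3 statements merged into one kernel-verified Lean document; each statement's English description precedes it below -/
import Mathlib

section
/- Let A be a ring equipped with an exhaustive filtration F₀A ⊆ F₁A ⊆ F₂A ⊆ ⋯ by additive subgroups with (FᵢA)(FⱼA) ⊆ F_{i+j}A and ⋃ᵢ FᵢA = A. If the associated graded ring gr_F A = ⊕ᵢ FᵢA/F_{i-1}A is left Noetherian, then A is left Noetherian. -/
/-!
The symbols of a left ideal `I ⊆ A` generate a left ideal of the Noetherian ring `gr A`, so
finitely many symbols `σ(xₜ)` with `xₜ ∈ I` generate it. For `a ∈ I ∩ FₙA`, write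
`σₙ(a) = ∑ cₜ σ(xₜ)` with `cₜ` homogeneous of degree `n - deg xₜ`; lifting each `cₜ` to `yₜ`
gives `a' = ∑ yₜ xₜ` with the same symbol as `a`, so `a - a' ∈ F_{n-1}A`, and induction on `n`
shows that the `xₜ` generate `I`.
-/

theorem DirectSum.exists_homogeneous_coeffs_of_mem_span_range {B σ ι : Type*} [Ring B]
    [SetLike σ B] [AddSubgroupClass σ B] (𝒜 : ℕ → σ) [GradedRing 𝒜] [Fintype ι]
    {g : ι → B} {d : ι → ℕ} (hg : ∀ t, g t ∈ 𝒜 (d t)) {n : ℕ} {b : B} (hb : b ∈ 𝒜 n)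
    (hspan : b ∈ Ideal.span (Set.range g)) :
    ∃ c : ι → B, (∀ t, c t ∈ 𝒜 (n - d t)) ∧ b = ∑ t with d t ≤ n, c t * g t := by
  classical
  obtain ⟨f, rfl⟩ := (Submodule.mem_span_range_iff_exists_fun B).1 hspan
  refine ⟨fun t => decompose 𝒜 (f t) (n - d t), fun t => SetLike.coe_mem _, ?_⟩
  rw [← decompose_of_mem_same 𝒜 hb, decompose_sum, DFinsupp.finsetSum_apply,
    AddSubmonoidClass.coe_finsetSum, Finset.sum_filter]
  simp only [smul_eq_mul, coe_decompose_mul_of_right_mem 𝒜 n (hg _)]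

section SymbolMap

variable {A B : Type*} [Ring A] [Ring B] {F : ℕ → AddSubgroup A} {gB : ℕ → AddSubgroup B}
  (π : ∀ i, F i →+ B)

def symbolIdeal (I : Ideal A) : Ideal B :=
  Ideal.span {b | ∃ i, ∃ a : F i, (a : A) ∈ I ∧ π i a = b}

variable {π}

theorem symbol_mem_symbolIdeal {I : Ideal A} {i : ℕ} {a : F i} (ha : (a : A) ∈ I) :
    π i a ∈ symbolIdeal π I :=
  Ideal.subset_span ⟨i, a, ha, rfl⟩

theorem gradedMonoid_of_symbol (hone : (1 : A) ∈ F 0) (hπone : π 0 ⟨1, hone⟩ = 1)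
    (hmul : ∀ i j : ℕ, ∀ a b : A, a ∈ F i → b ∈ F j → a * b ∈ F (i + j))
    (hπmul : ∀ i j (a : F i) (b : F j),
      π (i + j) ⟨(a : A) * (b : A), hmul i j a b a.2 b.2⟩ = π i a * π j b)
    (hrange : ∀ i (a : F i), π i a ∈ gB i) (hsurj : ∀ i, ∀ b ∈ gB i, ∃ a : F i, π i a = b) :
    SetLike.GradedMonoid gB where
  one_mem := hπone ▸ hrange 0 _
  mul_mem := by
    intro i j _ _ hx hy
    obtain ⟨a, rfl⟩ := hsurj i _ hx
    obtain ⟨b, rfl⟩ := hsurj j _ hy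
    exact hπmul i j a b ▸ hrange _ _

theorem symbol_mul_of_add_eq (hπmul : ∀ i j (a : F i) (b : F j) (hab : (a : A) * b ∈ F (i + j)),
      π (i + j) ⟨a * b, hab⟩ = π i a * π j b)
    {i j n : ℕ} (h : i + j = n) (a : F i) (b : F j) (hab : (a : A) * b ∈ F n) :
    π n ⟨a * b, hab⟩ = π i a * π j b := by
  subst h
  exact hπmul i j a b hab

theorem exists_mem_span_symbol_eq [GradedRing gB] {ι : Type*} [Fintype ι]
    (hmul : ∀ i j : ℕ, ∀ a b : A, a ∈ F i → b ∈ F j → a * b ∈ F (i + j))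
    (hπmul : ∀ i j (a : F i) (b : F j) (hab : (a : A) * b ∈ F (i + j)),
      π (i + j) ⟨a * b, hab⟩ = π i a * π j b)
    (hrange : ∀ i (a : F i), π i a ∈ gB i) (hsurj : ∀ i, ∀ b ∈ gB i, ∃ a : F i, π i a = b)
    {d : ι → ℕ} (x : ∀ t, F (d t)) {n : ℕ} (a : F n)
    (ha : π n a ∈ Ideal.span (Set.range fun t => π (d t) (x t))) :
    ∃ a' : F n, (a' : A) ∈ Ideal.span (Set.range fun t => (x t : A)) ∧ π n a' = π n a := by
  classical
  obtain ⟨c, hc, hsum⟩ := DirectSum.exists_homogeneous_coeffs_of_mem_span_range gB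
    (fun t => hrange (d t) (x t)) (hrange n a) ha
  choose y hy using fun t => hsurj _ _ (hc t)
  let z : ι → F n := fun t =>
    if h : d t ≤ n then
      ⟨y t * x t, by simpa [Nat.sub_add_cancel h] using hmul _ _ _ _ (y t).2 (x t).2⟩
    else 0
  have hz : ∀ t, π n (z t) = if d t ≤ n then c t * π (d t) (x t) else 0 := by
    intro t
    by_cases h : d t ≤ n
    · simp only [z, dif_pos h, if_pos h, symbol_mul_of_add_eq hπmul (Nat.sub_add_cancel h), hy]
    · simp only [z, dif_neg h, if_neg h, map_zero]
  refine ⟨∑ t, z t, ?_, ?_⟩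
  · rw [AddSubgroup.val_finsetSum]
    refine Ideal.sum_mem _ fun t _ => ?_
    by_cases h : d t ≤ n
    · simpa [z, h] using Ideal.mul_mem_left _ (y t : A) (Ideal.subset_span (Set.mem_range_self t))
    · simp [z, h]
  · rw [map_sum, hsum, Finset.sum_filter]
    exact Finset.sum_congr rfl fun t _ => hz t

theorem mem_of_exists_symbol_eq (hker0 : ∀ a : F 0, π 0 a = 0 ↔ a = 0)
    (hker : ∀ i (a : F (i + 1)), π (i + 1) a = 0 ↔ (a : A) ∈ F i) {I J : Ideal A} (hJI : J ≤ I)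
    (happrox : ∀ n (a : F n), (a : A) ∈ I → ∃ a' : F n, (a' : A) ∈ J ∧ π n a' = π n a) :
    ∀ n (a : F n), (a : A) ∈ I → (a : A) ∈ J := by
  intro n
  induction n with
  | zero =>
    intro a ha
    obtain ⟨a', ha'J, h⟩ := happrox 0 a ha
    have : a' = a := sub_eq_zero.1 ((hker0 _).1 (by rw [map_sub, h, sub_self]))
    exact this ▸ ha'J
  | succ n ih =>
    intro a ha
    obtain ⟨a', ha'J, h⟩ := happrox (n + 1) a ha
    have hlower : (a : A) - a' ∈ F n := (hker n (a - a')).1 (by rw [map_sub, h, sub_self])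
    have := ih ⟨_, hlower⟩ (I.sub_mem ha (hJI ha'J))
    simpa using J.add_mem this ha'J

end SymbolMap

theorem isNoetherianRing_of_gr_isNoetherianRing_general
    (A B : Type*) [Ring A] [Ring B]
    (F : ℕ → AddSubgroup A)
    (hone : (1 : A) ∈ F 0)
    (hmul : ∀ i j : ℕ, ∀ a b : A, a ∈ F i → b ∈ F j → a * b ∈ F (i + j))
    (hexh : ∀ a : A, ∃ i, a ∈ F i)
    (gB : ℕ → AddSubgroup B)
    (hinternal : DirectSum.IsInternal (fun i => (gB i).toIntSubmodule))
    (π : ∀ i, F i →+ B)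
    (hrange : ∀ i (a : F i), π i a ∈ gB i)
    (hsurj : ∀ i, ∀ b ∈ gB i, ∃ a : F i, π i a = b)
    (hker0 : ∀ a : F 0, π 0 a = 0 ↔ a = 0)
    (hker : ∀ i (a : F (i + 1)), π (i + 1) a = 0 ↔ (a : A) ∈ F i)
    (hπone : π 0 ⟨1, hone⟩ = 1)
    (hπmul : ∀ i j (a : F i) (b : F j),
      π (i + j) ⟨(a : A) * (b : A), hmul i j a b a.2 b.2⟩ = π i a * π j b)
    (hB : IsNoetherianRing B) :
    IsNoetherianRing A := by
  have := gradedMonoid_of_symbol hone hπone hmul hπmul hrange hsurj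
  let _ : GradedRing gB := { (hinternal : DirectSum.IsInternal gB).chooseDecomposition with }
  rw [isNoetherianRing_iff_ideal_fg]
  intro I
  obtain ⟨T, hTS, hT⟩ := (Submodule.fg_span_iff_fg_span_finset_subset _).1
    (hB.noetherian (symbolIdeal π I))
  choose d x hxI hx using fun t : T => hTS t.2
  have hsymbol : symbolIdeal π I = Ideal.span (Set.range fun t => π (d t) (x t)) := by
    simp only [hx, Subtype.range_coe_subtype, Finset.setOfPred_mem]
    exact hT
  have hspan_le : Ideal.span (Set.range fun t => (x t : A)) ≤ I :=
    Ideal.span_le.2 (Set.range_subset_iff.2 hxI)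
  suffices I = Ideal.span (Set.range fun t => (x t : A)) from
    this ▸ Submodule.fg_span (Set.finite_range _)
  refine le_antisymm (fun a ha => ?_) hspan_le
  obtain ⟨n, hn⟩ := hexh a
  refine mem_of_exists_symbol_eq hker0 hker hspan_le (fun n a ha => ?_) n ⟨a, hn⟩ ha
  exact exists_mem_span_symbol_eq hmul (fun i j a b _ => hπmul i j a b) hrange hsurj x a
    (hsymbol ▸ symbol_mem_symbolIdeal ha)

/-- Let `A` be a ring with an exhaustive filtration `F₀A ⊆ F₁A ⊆ ⋯` by additive subgroups
satisfying `(FᵢA)(FⱼA) ⊆ F_{i+j}A` and `⋃ᵢ FᵢA = A`, and let `B` be its associated graded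
ring: `B` is internally graded by additive subgroups `gB i`, and for each `i` the symbol map
`π i : FᵢA → B` is an additive map landing in `gB i`, surjecting onto `gB i`, with kernel
`F_{i-1}A` (trivial kernel in degree `0`), multiplicative on symbols, and sending `1` to `1`.
If `B` is left Noetherian then `A` is left Noetherian. -/
theorem isNoetherianRing_of_gr_isNoetherianRing
    (A B : Type*) [Ring A] [Ring B]
    (F : ℕ → AddSubgroup A) (hF : Monotone F)
    (hone : (1 : A) ∈ F 0)
    (hmul : ∀ i j : ℕ, ∀ a b : A, a ∈ F i → b ∈ F j → a * b ∈ F (i + j))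
    (hexh : ∀ a : A, ∃ i, a ∈ F i)
    (gB : ℕ → AddSubgroup B)
    (hinternal : DirectSum.IsInternal (fun i => (gB i).toIntSubmodule))
    (π : ∀ i, F i →+ B)
    (hrange : ∀ i (a : F i), π i a ∈ gB i)
    (hsurj : ∀ i, ∀ b ∈ gB i, ∃ a : F i, π i a = b)
    (hker0 : ∀ a : F 0, π 0 a = 0 ↔ a = 0)
    (hker : ∀ i (a : F (i + 1)), π (i + 1) a = 0 ↔ (a : A) ∈ F i)
    (hπone : π 0 ⟨1, hone⟩ = 1)
    (hπmul : ∀ i j (a : F i) (b : F j),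
      π (i + j) ⟨(a : A) * (b : A), hmul i j a b a.2 b.2⟩ = π i a * π j b)
    (hB : IsNoetherianRing B) :
    IsNoetherianRing A :=
  isNoetherianRing_of_gr_isNoetherianRing_general A B F hone hmul hexh gB hinternal π hrange hsurj
    hker0 hker hπone hπmul hB
end

section
/- Let A be an associative unital C[t]-algebra in which t is central and a non-zero-divisor, and set A₀ = A/tA. Suppose A₀ is such that its center Z(A₀) is considered. For z₁, z₂ ∈ Z(A₀) choose lifts ẑ₁, ẑ₂ ∈ A; then [ẑ₁, ẑ₂] ∈ tA, and the element {z₁, z₂} := ([ẑ₁, ẑ₂]/t) mod tA lies in Z(A₀), is independent of the choice of lifts, and the resulting bracket { , } makes Z(A₀) into a Poisson algebra (C-bilinear, antisymmetric, satisfying the Jacobi identity and the Leibniz rule). -/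
/-!
Every claim becomes an identity in the Lie ring `(A, ⁅x, y⁆ = x * y - y * x)` once it is
multiplied by a power of `t`, which is central and can be cancelled. If `⁅z₁, z₂⁆ = t * w`, then
`t * ⁅w, a⁆ = ⁅⁅z₁, z₂⁆, a⁆ = ⁅z₁, ⁅z₂, a⁆⁆ - ⁅z₂, ⁅z₁, a⁆⁆`, and both inner commutators lie in
`tA`, so `⁅w, a⁆ ∈ tA`; changing a lift by `t * d` changes the divided commutator by commutators
with `d`, which lie in `tA` for the same reason. Antisymmetry, linearity and the Leibniz rule hold
exactly after multiplying by `t`, and the Jacobi identity holds exactly after multiplying by `t²`.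
-/

attribute [local instance] LieRing.ofAssociativeRing

section DividedCommutator

variable {A : Type*} [Ring A] {t : A}

def IsCentralModulo (t z : A) : Prop :=
  ∀ a, t ∣ ⁅z, a⁆

theorem lie_mul_central (ht : ∀ a, Commute t a) (x y : A) : ⁅x, t * y⁆ = t * ⁅x, y⁆ := by
  rw [Ring.lie_def, Ring.lie_def, mul_sub, ← mul_assoc, ← (ht x).eq, mul_assoc, mul_assoc]

theorem central_mul_lie (ht : ∀ a, Commute t a) (x y : A) : ⁅t * x, y⁆ = t * ⁅x, y⁆ := by
  rw [← lie_skew, lie_mul_central ht, ← mul_neg, lie_skew]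

theorem IsCentralModulo.of_lie_eq_mul (ht : ∀ a, Commute t a) (hreg : IsLeftRegular t)
    {z₁ z₂ w : A} (h₁ : IsCentralModulo t z₁) (h₂ : IsCentralModulo t z₂)
    (hw : ⁅z₁, z₂⁆ = t * w) : IsCentralModulo t w := by
  intro a
  obtain ⟨b₁, hb₁⟩ := h₁ a
  obtain ⟨b₂, hb₂⟩ := h₂ a
  have hwa : ⁅w, a⁆ = ⁅z₁, b₂⁆ - ⁅z₂, b₁⁆ := hreg <| by
    calc t * ⁅w, a⁆ = ⁅⁅z₁, z₂⁆, a⁆ := by rw [hw, central_mul_lie ht]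
      _ = ⁅z₁, ⁅z₂, a⁆⁆ - ⁅z₂, ⁅z₁, a⁆⁆ := lie_lie z₁ z₂ a
      _ = t * (⁅z₁, b₂⁆ - ⁅z₂, b₁⁆) := by
        rw [hb₁, hb₂, lie_mul_central ht, lie_mul_central ht, mul_sub]
  rw [hwa]
  exact dvd_sub (h₁ b₂) (h₂ b₁)

theorem IsCentralModulo.dvd_sub_of_lie_eq_mul (ht : ∀ a, Commute t a) (hreg : IsLeftRegular t)
    {z₁ z₁' z₂ z₂' w w' : A} (h₁ : IsCentralModulo t z₁) (h₂ : IsCentralModulo t z₂)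
    (hz₁ : t ∣ z₁ - z₁') (hz₂ : t ∣ z₂ - z₂') (hw : ⁅z₁, z₂⁆ = t * w)
    (hw' : ⁅z₁', z₂'⁆ = t * w') : t ∣ w - w' := by
  obtain ⟨d₁, hd₁⟩ := hz₁
  obtain ⟨d₂, hd₂⟩ := hz₂
  obtain rfl : z₁' = z₁ - t * d₁ := by rw [← hd₁, sub_sub_cancel]
  obtain rfl : z₂' = z₂ - t * d₂ := by rw [← hd₂, sub_sub_cancel]
  have hdiff : w - w' = ⁅z₁, d₂⁆ - ⁅z₂, d₁⁆ - t * ⁅d₁, d₂⁆ := hreg <| by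
    simp only [mul_sub, ← hw, ← hw', sub_lie, lie_sub, lie_mul_central ht, central_mul_lie ht,
      ← lie_skew z₂ d₁]
    noncomm_ring
  rw [hdiff]
  exact dvd_sub (dvd_sub (h₁ d₂) (h₂ d₁)) (dvd_mul_right t _)

theorem add_eq_zero_of_lie_eq_mul (hreg : IsLeftRegular t) {x y w w' : A}
    (hw : ⁅x, y⁆ = t * w) (hw' : ⁅y, x⁆ = t * w') : w + w' = 0 :=
  hreg <| show t * _ = t * _ by rw [mul_add, ← hw, ← hw', ← lie_skew x y, neg_add_cancel, mul_zero]

theorem eq_add_of_lie_add_eq_mul (hreg : IsLeftRegular t) {x y₁ y₂ w w₁ w₂ : A}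
    (hw : ⁅x, y₁ + y₂⁆ = t * w) (hw₁ : ⁅x, y₁⁆ = t * w₁) (hw₂ : ⁅x, y₂⁆ = t * w₂) :
    w = w₁ + w₂ :=
  hreg <| show t * _ = t * _ by rw [mul_add, ← hw, ← hw₁, ← hw₂, lie_add]

theorem eq_smul_of_lie_smul_eq_mul {R : Type*} [CommRing R] [Algebra R A]
    (hreg : IsLeftRegular t) {x y w w₁ : A} (c : R)
    (hw : ⁅x, c • y⁆ = t * w) (hw₁ : ⁅x, y⁆ = t * w₁) : w = c • w₁ :=
  hreg <| show t * _ = t * _ by rw [mul_smul_comm, ← hw, ← hw₁]; exact lie_smul c x y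

theorem eq_leibniz_of_lie_mul_eq_mul (ht : ∀ a, Commute t a) (hreg : IsLeftRegular t)
    {x y₁ y₂ w w₁ w₂ : A} (hw : ⁅x, y₁ * y₂⁆ = t * w) (hw₁ : ⁅x, y₁⁆ = t * w₁)
    (hw₂ : ⁅x, y₂⁆ = t * w₂) : w = w₁ * y₂ + y₁ * w₂ :=
  hreg <| show t * _ = t * _ by
    rw [mul_add, ← mul_assoc, ← hw₁, ← mul_assoc, (ht y₁).eq, mul_assoc, ← hw₂, ← hw]
    simp only [Ring.lie_def]
    noncomm_ring

theorem jacobi_of_lie_eq_mul (ht : ∀ a, Commute t a) (hreg : IsLeftRegular t)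
    {x y z w₁ w₂ w₃ u₁ u₂ u₃ : A} (hw₁ : ⁅y, z⁆ = t * w₁) (hw₂ : ⁅z, x⁆ = t * w₂)
    (hw₃ : ⁅x, y⁆ = t * w₃) (hu₁ : ⁅x, w₁⁆ = t * u₁) (hu₂ : ⁅y, w₂⁆ = t * u₂)
    (hu₃ : ⁅z, w₃⁆ = t * u₃) : u₁ + u₂ + u₃ = 0 :=
  (hreg.mul hreg) <| show t * t * _ = t * t * _ by
    rw [mul_zero, ← lie_jacobi x y z, hw₁, hw₂, hw₃, lie_mul_central ht, lie_mul_central ht,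
      lie_mul_central ht, hu₁, hu₂, hu₃, mul_assoc, mul_add, mul_add, mul_add, mul_add]

end DividedCommutator

/-- Hayashi's construction. Let `A` be a unital associative `ℂ[t]`-algebra in which `t` is
central and a non-zero-divisor, let `I = tA` and let `Z` be the set of elements of `A` that
are central modulo `tA` (the lifts of elements of the center `Z(A₀)` of `A₀ = A/tA`). Then
for lifts `ẑ₁, ẑ₂` of central elements the commutator `[ẑ₁, ẑ₂]` lies in `tA`; the divided
commutator `w` (with `[ẑ₁, ẑ₂] = t·w`) is again central mod `tA` and independent of the
choice of lifts mod `tA`; and the induced bracket on `Z(A₀)` is antisymmetric, additive and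
`ℂ`-linear, and satisfies the Jacobi identity and the Leibniz rule — so it makes `Z(A₀)`
into a Poisson algebra. -/
theorem hayashi_poisson_bracket
    (A : Type*) [Ring A] [Algebra ℂ A] (t : A)
    (hcen : ∀ a : A, t * a = a * t)
    (hreg : ∀ a : A, t * a = 0 → a = 0)
    (I : A → Prop) (hI : ∀ x, I x ↔ ∃ a, x = t * a)
    (Z : A → Prop) (hZ : ∀ z, Z z ↔ ∀ a : A, I (z * a - a * z)) :
    -- the commutator of lifts of central elements lies in tA
    (∀ z₁ z₂, Z z₁ → Z z₂ → I (z₁ * z₂ - z₂ * z₁)) ∧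
    -- the divided commutator is central mod tA
    (∀ z₁ z₂ w, Z z₁ → Z z₂ → z₁ * z₂ - z₂ * z₁ = t * w → Z w) ∧
    -- independence of the choice of lifts, mod tA
    (∀ z₁ z₁' z₂ z₂' w w', Z z₁ → Z z₂ → I (z₁ - z₁') → I (z₂ - z₂') →
      z₁ * z₂ - z₂ * z₁ = t * w → z₁' * z₂' - z₂' * z₁' = t * w' → I (w - w')) ∧
    -- antisymmetry
    (∀ z₁ z₂ w w', z₁ * z₂ - z₂ * z₁ = t * w → z₂ * z₁ - z₁ * z₂ = t * w' →
      I (w + w')) ∧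
    -- additivity in the second argument
    (∀ z₁ z₂ z₃ w w₂ w₃, z₁ * (z₂ + z₃) - (z₂ + z₃) * z₁ = t * w →
      z₁ * z₂ - z₂ * z₁ = t * w₂ → z₁ * z₃ - z₃ * z₁ = t * w₃ →
      I (w - (w₂ + w₃))) ∧
    -- ℂ-linearity in the second argument
    (∀ (c : ℂ) z₁ z₂ w w₂, z₁ * (c • z₂) - (c • z₂) * z₁ = t * w →
      z₁ * z₂ - z₂ * z₁ = t * w₂ → I (w - c • w₂)) ∧
    -- Jacobi identity mod tA
    (∀ z₁ z₂ z₃ w₁₂ w₂₃ w₃₁ u₁ u₂ u₃, Z z₁ → Z z₂ → Z z₃ →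
      z₁ * z₂ - z₂ * z₁ = t * w₁₂ → z₂ * z₃ - z₃ * z₂ = t * w₂₃ →
      z₃ * z₁ - z₁ * z₃ = t * w₃₁ →
      z₁ * w₂₃ - w₂₃ * z₁ = t * u₁ → z₂ * w₃₁ - w₃₁ * z₂ = t * u₂ →
      z₃ * w₁₂ - w₁₂ * z₃ = t * u₃ → I (u₁ + u₂ + u₃)) ∧
    -- Leibniz rule mod tA
    (∀ z₁ z₂ z₃ w w₂ w₃, Z z₁ → Z z₂ → Z z₃ →
      z₁ * (z₂ * z₃) - (z₂ * z₃) * z₁ = t * w →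
      z₁ * z₂ - z₂ * z₁ = t * w₂ → z₁ * z₃ - z₃ * z₁ = t * w₃ →
      I (w - (w₂ * z₃ + z₂ * w₃))) := by
  obtain rfl : I = (t ∣ ·) := funext fun x => propext (hI x)
  obtain rfl : Z = IsCentralModulo t := funext fun z => propext (hZ z)
  have hreg : IsLeftRegular t := isLeftRegular_iff_right_eq_zero_of_mul.mpr hreg
  refine ⟨fun z₁ z₂ h₁ _ => h₁ z₂, fun _ _ _ h₁ h₂ hw => h₁.of_lie_eq_mul hcen hreg h₂ hw,
    fun _ _ _ _ _ _ h₁ h₂ => h₁.dvd_sub_of_lie_eq_mul hcen hreg h₂, ?_, ?_, ?_, ?_, ?_⟩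
  · intro _ _ _ _ hw hw'
    exact add_eq_zero_of_lie_eq_mul hreg hw hw' ▸ dvd_zero t
  · intro _ _ _ _ _ _ hw hw₂ hw₃
    exact sub_eq_zero.mpr (eq_add_of_lie_add_eq_mul hreg hw hw₂ hw₃) ▸ dvd_zero t
  · intro c _ _ _ _ hw hw₂
    exact sub_eq_zero.mpr (eq_smul_of_lie_smul_eq_mul hreg c hw hw₂) ▸ dvd_zero t
  · intro _ _ _ _ _ _ _ _ _ _ _ _ h₁₂ h₂₃ h₃₁ hu₁ hu₂ hu₃
    exact jacobi_of_lie_eq_mul hcen hreg h₂₃ h₃₁ h₁₂ hu₁ hu₂ hu₃ ▸ dvd_zero t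
  · intro _ _ _ _ _ _ _ _ _ hw hw₂ hw₃
    exact sub_eq_zero.mpr (eq_leibniz_of_lie_mul_eq_mul hcen hreg hw hw₂ hw₃) ▸ dvd_zero t
end

section
/- Let R be a finite-dimensional Z-graded associative unital algebra over a field. Then the Jacobson radical of R is a homogeneous (graded) ideal: if a ∈ rad(R) and a = Σₙ aₙ is its decomposition into homogeneous components, then every aₙ belongs to rad(R). -/
/-!
The Jacobson radical `J` of a finite-dimensional algebra is nilpotent, say `J ^ m = 0`.
Let `a ∈ J` have no components above degree `d`, and let `c` be its degree-`d` component.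
For homogeneous `r₁, …, rₘ`, the product `r₁ c ⋯ rₘ c` is the top-degree component of
`r₁ a ⋯ rₘ a ∈ J ^ m = 0`, hence vanishes. Since this product is multilinear in the `rᵢ` and `R`
has a basis of homogeneous elements, `(y c) ^ m = 0` for every `y`, so `c ∈ J`.
Removing `c` from `a` and inducting on the number of nonzero components gives every component.
-/

open DirectSum

theorem Ideal.mem_jacobson_bot_of_forall_isNilpotent_mul {R : Type*} [Ring R] {c : R}
    (h : ∀ y, IsNilpotent (y * c)) : c ∈ Ideal.jacobson (⊥ : Ideal R) := by
  refine Ideal.mem_jacobson_iff.mpr fun y => ?_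
  obtain ⟨u, hu⟩ := (h y).isUnit_add_one
  refine ⟨↑u⁻¹, Ideal.mem_bot.mpr ?_⟩
  rw [mul_assoc, ← mul_add_one, ← hu, Units.inv_mul, sub_self]

theorem Ideal.list_prod_ofFn_mem_pow {R : Type*} [Semiring R] {I : Ideal R} {m : ℕ}
    {x : Fin m → R} (hx : ∀ j, x j ∈ I) : (List.ofFn x).prod ∈ I ^ m := by
  induction m with
  | zero => simp [Submodule.pow_zero]
  | succ m ih =>
    rw [List.ofFn_succ', List.prod_concat, Submodule.pow_succ]
    exact Ideal.mul_mem_mul (ih fun j => hx j.castSucc) (hx (Fin.last m))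

theorem DirectSum.coe_decompose_mul_eq_sum {ι R σ : Type*} [DecidableEq ι] [AddGroup ι]
    [Semiring R] [SetLike σ R] [AddSubmonoidClass σ R] (𝒜 : ι → σ) [GradedRing 𝒜]
    [∀ (i : ι) (x : 𝒜 i), Decidable (x ≠ 0)] (x y : R) (n : ι) :
    (decompose 𝒜 (x * y) n : R) =
      ∑ i ∈ (decompose 𝒜 x).support, (decompose 𝒜 x i : R) * decompose 𝒜 y (-i + n) := by
  conv_lhs => rw [← sum_support_decompose 𝒜 x, Finset.sum_mul, decompose_sum]
  rw [DFinsupp.finsetSum_apply, AddSubmonoidClass.coe_finsetSum]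
  refine Finset.sum_congr rfl fun i _ => ?_
  rw [← coe_decompose_mul_add_of_left_mem 𝒜 (decompose 𝒜 x i).2, add_neg_cancel_left]

section TopComponent

variable {ι R σ : Type*} [DecidableEq ι]

/-- `x` has no components in degrees above `d`, and `y` is its component of degree `d`
(which may be zero). -/
def IsTopComponent [Preorder ι] [AddCommMonoid R] [SetLike σ R] [AddSubmonoidClass σ R]
    (𝒜 : ι → σ) [Decomposition 𝒜] (d : ι) (x y : R) : Prop :=
  (∀ i, d < i → (decompose 𝒜 x i : R) = 0) ∧ (decompose 𝒜 x d : R) = y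

theorem IsTopComponent.of_mem [Preorder ι] [AddCommMonoid R] [SetLike σ R]
    [AddSubmonoidClass σ R] {𝒜 : ι → σ} [Decomposition 𝒜] {d : ι} {x : R} (hx : x ∈ 𝒜 d) :
    IsTopComponent 𝒜 d x x :=
  ⟨fun _ hi => decompose_of_mem_ne 𝒜 hx hi.ne, decompose_of_mem_same 𝒜 hx⟩

theorem coe_decompose_mem_of_isTopComponent_mem [LinearOrder ι] [AddCommGroup R] [SetLike σ R]
    [AddSubgroupClass σ R] (𝒜 : ι → σ) [Decomposition 𝒜] (S : AddSubgroup R)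
    (hS : ∀ b ∈ S, ∀ d c, IsTopComponent 𝒜 d b c → c ∈ S) {a : R} (ha : a ∈ S) (n : ι) :
    (decompose 𝒜 a n : R) ∈ S := by
  classical
  suffices ∀ s : Finset ι, ∀ a ∈ S, (decompose 𝒜 a).support ⊆ s → (decompose 𝒜 a n : R) ∈ S from
    this _ a ha subset_rfl
  intro s
  induction s using Finset.induction_on_max with
  | empty =>
    intro a _ has
    rw [DFinsupp.notMem_support_iff.mp fun hn => by simpa using has hn]
    exact zero_mem S
  | insert d s hlt ih =>
    intro a ha has
    have htop : IsTopComponent 𝒜 d a (decompose 𝒜 a d) := by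
      refine ⟨fun i hi => ?_, rfl⟩
      have hi' : i ∉ insert d s := by
        simp only [Finset.mem_insert, not_or]
        exact ⟨hi.ne', fun his => (hlt i his).not_gt hi⟩
      simpa using DFinsupp.notMem_support_iff.mp fun h => hi' (has h)
    have hd : (decompose 𝒜 a d : R) ∈ S := hS a ha d _ htop
    have hcomp : ∀ i ≠ d, decompose 𝒜 (a - decompose 𝒜 a d) i = decompose 𝒜 a i := by
      intro i hi
      rw [decompose_sub, decompose_coe, DFinsupp.sub_apply, of_eq_of_ne _ _ _ hi, sub_zero]
    by_cases hn : n = d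
    · exact hn ▸ hd
    rw [← hcomp n hn]
    refine ih _ (sub_mem ha hd) fun i hi => ?_
    have hid : i ≠ d := by
      rintro rfl
      simp [decompose_sub] at hi
    rw [DFinsupp.mem_support_iff, hcomp i hid] at hi
    exact (Finset.mem_insert.mp (has (DFinsupp.mem_support_iff.mpr hi))).resolve_left hid

variable [AddCommGroup ι] [LinearOrder ι] [IsOrderedAddMonoid ι]

theorem IsTopComponent.mul [Semiring R] [SetLike σ R] [AddSubmonoidClass σ R] {𝒜 : ι → σ}
    [GradedRing 𝒜] {p q : ι} {x x' y y' : R} (hx : IsTopComponent 𝒜 p x x')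
    (hy : IsTopComponent 𝒜 q y y') : IsTopComponent 𝒜 (p + q) (x * y) (x' * y') := by
  classical
  have hterm : ∀ n i, p + q ≤ n → (i, n) ≠ (p, p + q) →
      (decompose 𝒜 x i : R) * decompose 𝒜 y (-i + n) = 0 := by
    intro n i hn hne
    rcases lt_or_ge p i with hi | hi
    · rw [hx.1 i hi, zero_mul]
    rcases lt_or_eq_of_le (show q ≤ -i + n by grind) with hq | hq
    · rw [hy.1 _ hq, mul_zero]
    · exact absurd (Prod.ext (by grind) (by grind)) hne
  refine ⟨fun n hn => ?_, ?_⟩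
  · rw [coe_decompose_mul_eq_sum]
    exact Finset.sum_eq_zero fun i _ => hterm n i hn.le (by grind)
  · rw [coe_decompose_mul_eq_sum, Finset.sum_eq_single p, ← hx.2, ← hy.2, neg_add_cancel_left]
    · exact fun i _ hi => hterm _ i le_rfl (by grind)
    · intro hp
      rw [DFinsupp.notMem_support_iff.mp hp, ZeroMemClass.coe_zero, zero_mul]

theorem IsTopComponent.list_prod_ofFn [Semiring R] [SetLike σ R] [AddSubmonoidClass σ R]
    {𝒜 : ι → σ} [GradedRing 𝒜] {m : ℕ} {d : Fin m → ι} {x y : Fin m → R}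
    (h : ∀ j, IsTopComponent 𝒜 (d j) (x j) (y j)) :
    IsTopComponent 𝒜 (∑ j, d j) (List.ofFn x).prod (List.ofFn y).prod := by
  induction m with
  | zero => simpa using IsTopComponent.of_mem (𝒜 := 𝒜) SetLike.GradedOne.one_mem
  | succ m ih =>
    simp only [List.ofFn_succ, List.prod_cons, Fin.sum_univ_succ]
    exact (h 0).mul (ih fun j => h j.succ)

theorem pow_mul_eq_zero_of_isTopComponent {k : Type*} [Field k] [Ring R] [Algebra k R]
    {𝒜 : ι → Submodule k R} [GradedAlgebra 𝒜] {I : Ideal R} {m : ℕ} (hI : I ^ m = ⊥)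
    {a c : R} {d : ι} (ha : a ∈ I) (hc : IsTopComponent 𝒜 d a c) (y : R) : (y * c) ^ m = 0 := by
  let e i := Module.Basis.ofVectorSpace k (𝒜 i)
  let b := (Decomposition.isInternal 𝒜).collectedBasis e
  let F : MultilinearMap k (fun _ : Fin m => R) R :=
    (MultilinearMap.mkPiAlgebraFin k m R).compLinearMap fun _ => LinearMap.mulRight k c
  have hF : F = 0 := Module.Basis.ext_multilinear (fun _ => b) fun v => by
    have hv := IsTopComponent.list_prod_ofFn fun j =>
      (IsTopComponent.of_mem ((Decomposition.isInternal 𝒜).collectedBasis_mem e (v j))).mul hc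
    have h0 : (List.ofFn fun j => b (v j) * a).prod = 0 := by
      rw [← Ideal.mem_bot, ← hI]
      exact Ideal.list_prod_ofFn_mem_pow fun j => I.mul_mem_left _ ha
    rw [h0] at hv
    simp only [F, MultilinearMap.compLinearMap_apply, MultilinearMap.mkPiAlgebraFin_apply,
      LinearMap.mulRight_apply, _root_.zero_apply]
    rw [← hv.2, decompose_zero]
    rfl
  simpa [F, List.ofFn_const] using congr($hF fun _ => y)

end TopComponent

/-- Let `R` be a finite-dimensional `ℤ`-graded associative unital algebra over a field `k`.
Then the Jacobson radical of `R` (the intersection of all maximal left ideals, i.e.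
`Ideal.jacobson ⊥`) is a homogeneous ideal: every homogeneous component of an element of
the radical again lies in the radical. -/
theorem jacobson_radical_homogeneous
    (k R : Type*) [Field k] [Ring R] [Algebra k R] [FiniteDimensional k R]
    (𝒜 : ℤ → Submodule k R) [GradedAlgebra 𝒜]
    (a : R) (ha : a ∈ Ideal.jacobson (⊥ : Ideal R)) (n : ℤ) :
    (DirectSum.decompose 𝒜 a n : R) ∈ Ideal.jacobson (⊥ : Ideal R) := by
  have : IsArtinianRing R := .of_finite k R
  obtain ⟨m, hm⟩ := IsArtinianRing.isNilpotent_jacobson_bot (R := R)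
  refine coe_decompose_mem_of_isTopComponent_mem 𝒜 (Ideal.jacobson ⊥).toAddSubgroup
    (fun b hb d c hc => ?_) ha n
  exact Ideal.mem_jacobson_bot_of_forall_isNilpotent_mul fun y =>
    ⟨m, pow_mul_eq_zero_of_isTopComponent hm hb hc y⟩
end
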